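/- Let (wₙ) be a sequence of nonzero vectors in ℝ² whose directions converge to a unit vector ϑ, with ‖wₙ‖ → ∞, and such that |wₙ × wₙ₊₁| ≤ M for a fixed constant M and all n. Suppose also the angle between wₙ and ϑ is at most twice the angle between wₙ and wₙ₊₁. Then hₙ → 0, where hₙ is the component of wₙ perpendicular to ϑ (i.e., hₙ = |wₙ × ϑ|). -/

import Mathlib

/- Once the directions of `wₙ` converge, the angle `αₙ` between consecutive terms tends to `0`.
For `αₙ ≤ π/4` the hypothesis `angle(wₙ, ϑ) ≤ 2αₙ ≤ π/2` and `sin 2α ≤ 2 sin α` give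
`‖wₙ₊₁‖ · hₙ ≤ 2 |wₙ × wₙ₊₁| ≤ 2M`, and `‖wₙ₊₁‖ → ∞` forces `hₙ → 0`. -/

open Filter InnerProductGeometry

/-- The cross product of two planar vectors. -/
def cross (v w : EuclideanSpace ℝ (Fin 2)) : ℝ := v 0 * w 1 - v 1 * w 0

lemma abs_cross_eq_norm_mul_norm_mul_sin_angle (x y : EuclideanSpace ℝ (Fin 2)) :
    |cross x y| = ‖x‖ * ‖y‖ * Real.sin (angle x y) := by
  have hgram : (inner ℝ x x : ℝ) * inner ℝ y y - inner ℝ x y * inner ℝ x y = cross x y ^ 2 := by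
    simp only [PiLp.inner_apply, Fin.sum_univ_two, RCLike.inner_apply, conj_trivial, cross]
    ring
  rw [mul_comm, sin_angle_mul_norm_mul_norm, hgram, Real.sqrt_sq_eq_abs]

section

variable {V : Type*} [NormedAddCommGroup V] [InnerProductSpace ℝ V]

lemma angle_inv_norm_smul_left (x y : V) : angle (‖x‖⁻¹ • x) y = angle x y := by
  rcases eq_or_ne x 0 with rfl | hx
  · rw [smul_zero]
  · exact angle_smul_left_of_pos x y (inv_pos.2 (norm_pos_iff.2 hx))

lemma angle_inv_norm_smul_inv_norm_smul (x y : V) :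
    angle (‖x‖⁻¹ • x) (‖y‖⁻¹ • y) = angle x y := by
  rw [angle_inv_norm_smul_left, angle_comm, angle_inv_norm_smul_left, angle_comm]

lemma tendsto_angle_succ_of_tendsto_inv_norm_smul {w : ℕ → V} {ϑ : V} (hϑ : ϑ ≠ 0)
    (hdir : Tendsto (fun n => ‖w n‖⁻¹ • w n) atTop (nhds ϑ)) :
    Tendsto (fun n => angle (w n) (w (n + 1))) atTop (nhds 0) := by
  have hpair := hdir.prodMk_nhds (hdir.comp (tendsto_add_atTop_nat 1))
  have hlim := (continuousAt_angle (x := (ϑ, ϑ)) hϑ hϑ).tendsto.comp hpair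
  simpa only [Function.comp_def, angle_inv_norm_smul_inv_norm_smul, angle_self hϑ] using hlim

end

lemma norm_mul_abs_cross_le {x y ϑ : EuclideanSpace ℝ (Fin 2)} (hϑ : ‖ϑ‖ = 1)
    (hsmall : angle x y ≤ Real.pi / 4) (hang : angle x ϑ ≤ 2 * angle x y) :
    ‖y‖ * |cross x ϑ| ≤ 2 * |cross x y| := by
  set α := angle x y
  have hα : 0 ≤ α := angle_nonneg x y
  have hsin_α : 0 ≤ Real.sin α :=
    Real.sin_nonneg_of_nonneg_of_le_pi hα (by linarith [Real.pi_pos])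
  have hsin : Real.sin (angle x ϑ) ≤ 2 * Real.sin α :=
    calc Real.sin (angle x ϑ) ≤ Real.sin (2 * α) :=
          Real.sin_le_sin_of_le_of_le_pi_div_two (by linarith [angle_nonneg x ϑ, Real.pi_pos])
            (by linarith) hang
      _ = 2 * Real.sin α * Real.cos α := Real.sin_two_mul α
      _ ≤ 2 * Real.sin α := mul_le_of_le_one_right (by positivity) (Real.cos_le_one α)
  rw [abs_cross_eq_norm_mul_norm_mul_sin_angle, abs_cross_eq_norm_mul_norm_mul_sin_angle, hϑ]
  calc ‖y‖ * (‖x‖ * 1 * Real.sin (angle x ϑ)) = ‖x‖ * ‖y‖ * Real.sin (angle x ϑ) := by ring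
    _ ≤ ‖x‖ * ‖y‖ * (2 * Real.sin α) := by gcongr
    _ = 2 * (‖x‖ * ‖y‖ * Real.sin α) := by ring

theorem stmt_5_general (w : ℕ → EuclideanSpace ℝ (Fin 2)) (ϑ : EuclideanSpace ℝ (Fin 2))
    (hθ : ‖ϑ‖ = 1)
    (hdir : Tendsto (fun n => (‖w n‖)⁻¹ • w n) atTop (nhds ϑ))
    (hnorm : Tendsto (fun n => ‖w n‖) atTop atTop)
    (M : ℝ) (hM : ∀ n, |cross (w n) (w (n + 1))| ≤ M)
    (hang : ∀ n, angle (w n) ϑ ≤ 2 * angle (w n) (w (n + 1))) :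
    Tendsto (fun n => |cross (w n) ϑ|) atTop (nhds 0) := by
  have hϑ : ϑ ≠ 0 := norm_ne_zero_iff.1 (by rw [hθ]; exact one_ne_zero)
  have hnorm_succ : Tendsto (fun n => ‖w (n + 1)‖) atTop atTop :=
    hnorm.comp (tendsto_add_atTop_nat 1)
  have hsmall : ∀ᶠ n in atTop, angle (w n) (w (n + 1)) ≤ Real.pi / 4 :=
    (tendsto_angle_succ_of_tendsto_inv_norm_smul hϑ hdir).eventually
      (eventually_le_nhds (by positivity))
  have hbound : ∀ᶠ n in atTop, |cross (w n) ϑ| ≤ 2 * M / ‖w (n + 1)‖ := by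
    filter_upwards [hsmall, hnorm_succ.eventually_gt_atTop 0] with n hsmall_n hpos
    rw [le_div_iff₀ hpos, mul_comm]
    exact (norm_mul_abs_cross_le hθ hsmall_n (hang n)).trans (by linarith [hM n])
  exact squeeze_zero' (Eventually.of_forall fun n => abs_nonneg _) hbound
    (tendsto_const_nhds.div_atTop hnorm_succ)

/-- if the directions of `wₙ` converge to a unit vector `ϑ`, `‖wₙ‖ → ∞`,
`|wₙ × wₙ₊₁| ≤ M`, and `angle(wₙ, ϑ) ≤ 2·angle(wₙ, wₙ₊₁)`, then the perpendicular
components `hₙ = |wₙ × ϑ|` tend to `0`. -/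
theorem stmt_5 (w : ℕ → EuclideanSpace ℝ (Fin 2)) (ϑ : EuclideanSpace ℝ (Fin 2))
    (hθ : ‖ϑ‖ = 1) (hne : ∀ n, w n ≠ 0)
    (hdir : Tendsto (fun n => (‖w n‖)⁻¹ • w n) atTop (nhds ϑ))
    (hnorm : Tendsto (fun n => ‖w n‖) atTop atTop)
    (M : ℝ) (hM : ∀ n, |cross (w n) (w (n + 1))| ≤ M)
    (hang : ∀ n, angle (w n) ϑ ≤ 2 * angle (w n) (w (n + 1))) :
    Tendsto (fun n => |cross (w n) ϑ|) atTop (nhds 0) :=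
  stmt_5_general w ϑ hθ hdir hnorm M hM hang
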